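/- Consider the oblivious sampling experiment with parameters n ≥ 1, r ≥ 2, values s_i^h ∈ [−1,1] (i ∈ {1,…,r}, h ∈ {1,…,n}), p ∈ (0,1/2], γ ∈ [0,1] and λ > 0, and assume s_r^h = s_r for every h. Define σ^h := max_{i∈{1,…,r}} |s_i − s_i^h|. If there exists i ∈ {1,…,r−1} with s_i ≥ γ, then for every h with σ^h ≤ λ(1−p)/p it holds that P[J ≠ r | H = h] ≥ 1/6. -/

import Mathlib

open MeasureTheory ENNReal

/-- The Laplace distribution with parameter `l`: the measure on `ℝ` with density
`x ↦ exp(−|x|/l)/(2l)` with respect to Lebesgue measure. -/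
noncomputable def lapMeasure (l : ℝ) : Measure ℝ :=
  MeasureTheory.volume.withDensity fun x => ENNReal.ofReal (Real.exp (-|x| / l) / (2 * l))

/-- The uniform probability measure on `Fin n`. -/
noncomputable def unifFin (n : ℕ) : Measure (Fin n) :=
  (n : ℝ≥0∞)⁻¹ • Measure.count

open Set

/-! Fix a round `i < r` with `s_i ≥ γ`. Since `|s_i − s_i^h| ≤ σ^h ≤ λ(1−p)/p`, the leave-one-out
mean satisfies `s_i^{∖h} ≥ γ − λ`, so the experiment halts before round `r` as soon as the Laplace
noise `ν_i` exceeds `λ`. Given `H = h` this has probability `e⁻¹/2 > 1/6`, because `H` and `ν`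
are independent. -/

lemma lapMeasure_Ioi {l a : ℝ} (hl : 0 < l) (ha : 0 ≤ a) :
    lapMeasure l (Ioi a) = ENNReal.ofReal (Real.exp (-a / l) / 2) := by
  have hdens : ∀ x ∈ Ioi a, ENNReal.ofReal (Real.exp (-|x| / l) / (2 * l))
      = ENNReal.ofReal (Real.exp (-l⁻¹ * x) / (2 * l)) := fun x hx => by
    rw [abs_of_pos (ha.trans_lt hx), neg_div, neg_mul, inv_mul_eq_div]
  have hneg : -l⁻¹ < 0 := by simpa using hl
  rw [lapMeasure, withDensity_apply _ measurableSet_Ioi,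
    setLIntegral_congr_fun measurableSet_Ioi hdens,
    ← ofReal_integral_eq_lintegral_ofReal ((integrableOn_exp_mul_Ioi hneg a).div_const _)
      (ae_of_all _ fun x => by positivity),
    integral_div, integral_exp_mul_Ioi hneg a]
  congr 1
  field_simp

lemma lapMeasure_Iic {l a : ℝ} (hl : 0 < l) (ha : a ≤ 0) :
    lapMeasure l (Iic a) = ENNReal.ofReal (Real.exp (a / l) / 2) := by
  have hdens : ∀ x ∈ Iic a, ENNReal.ofReal (Real.exp (-|x| / l) / (2 * l))
      = ENNReal.ofReal (Real.exp (l⁻¹ * x) / (2 * l)) := fun x hx => by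
    rw [abs_of_nonpos (le_trans hx ha), neg_neg, inv_mul_eq_div]
  have hpos : 0 < l⁻¹ := inv_pos.mpr hl
  rw [lapMeasure, withDensity_apply _ measurableSet_Iic,
    setLIntegral_congr_fun measurableSet_Iic hdens,
    ← ofReal_integral_eq_lintegral_ofReal ((integrableOn_exp_mul_Iic hpos a).div_const _)
      (ae_of_all _ fun x => by positivity),
    integral_div, integral_exp_mul_Iic hpos a]
  congr 1
  field_simp

lemma isProbabilityMeasure_lapMeasure {l : ℝ} (hl : 0 < l) :
    IsProbabilityMeasure (lapMeasure l) := by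
  constructor
  rw [← Iic_union_Ioi (a := (0 : ℝ)),
    measure_union (Iic_disjoint_Ioi le_rfl) measurableSet_Ioi,
    lapMeasure_Iic hl le_rfl, lapMeasure_Ioi hl le_rfl,
    ← ENNReal.ofReal_add (by positivity) (by positivity)]
  norm_num

lemma unifFin_singleton (n : ℕ) (h : Fin n) : unifFin n {h} = (n : ℝ≥0∞)⁻¹ := by
  simp [unifFin]

lemma MeasureTheory.Measure.pi_eval_preimage {ι : Type*} [Fintype ι] {α : ι → Type*}
    [∀ i, MeasurableSpace (α i)] (μ : ∀ i, Measure (α i)) [∀ i, IsProbabilityMeasure (μ i)]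
    (i : ι) {s : Set (α i)} (hs : MeasurableSet s) :
    Measure.pi μ (Function.eval i ⁻¹' s) = μ i s :=
  (measurePreserving_eval μ i).measure_preimage hs.nullMeasurableSet

lemma measure_setOf_le_prod_div_fst_eq {α β : Type*} [MeasurableSpace α] [MeasurableSpace β]
    (μ : Measure α) (ν : Measure β) [IsProbabilityMeasure ν] {a : α}
    (ha₀ : μ {a} ≠ 0) (ha : μ {a} ≠ ∞) (P : α × β → Prop) :
    ν {x | P (a, x)} ≤ μ.prod ν {ω | P ω ∧ ω.1 = a} / μ.prod ν {ω | ω.1 = a} := by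
  have hslice : {ω : α × β | ω.1 = a} = {a} ×ˢ univ := by
    ext ⟨b, x⟩
    simp
  have hsub : {a} ×ˢ {x | P (a, x)} ⊆ {ω : α × β | P ω ∧ ω.1 = a} := by
    rintro ⟨b, x⟩ ⟨rfl, hx⟩
    exact ⟨hx, rfl⟩
  rw [hslice, Measure.prod_prod, measure_univ, mul_one,
    ENNReal.le_div_iff_mul_le (Or.inl ha₀) (Or.inl ha), mul_comm, ← Measure.prod_prod]
  exact measure_mono hsub

lemma sub_le_sub_mul_div_one_sub {p γ l m x : ℝ} (hp0 : 0 < p) (hp1 : p < 1) (hγ : γ ≤ m)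
    (hx : |m - x| ≤ l * (1 - p) / p) :
    γ - l ≤ (m - p * x) / (1 - p) := by
  have hq : 0 < 1 - p := by linarith
  have hpx : -(l * (1 - p)) ≤ p * (m - x) := by
    have := mul_le_mul_of_nonneg_left (neg_le_of_abs_le hx) hp0.le
    rwa [mul_neg, mul_div_cancel₀ _ hp0.ne'] at this
  rw [le_div_iff₀ hq]
  nlinarith

lemma one_sixth_le_exp_neg_one_div_two : (1 / 6 : ℝ≥0∞) ≤ ENNReal.ofReal (Real.exp (-1) / 2) := by
  have he : 1 / 3 ≤ Real.exp (-1) := by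
    rw [Real.exp_neg, one_div]
    exact inv_anti₀ (Real.exp_pos 1) (Real.exp_one_lt_d9.le.trans (by norm_num))
  rw [← ENNReal.ofReal_one, ← ENNReal.ofReal_ofNat 6, ← ENNReal.ofReal_div_of_pos (by norm_num)]
  exact ENNReal.ofReal_le_ofReal (by linarith)

theorem oblivious_sampling_halting_probability
    (n r : ℕ) (hr : 2 ≤ r)
    (s : ℕ → Fin n → ℝ) (p γ l : ℝ)
    (hp0 : 0 < p) (hp2 : p ≤ 1 / 2) (hl : 0 < l)
    (sbar : ℕ → ℝ)
    (sminus : ℕ → Fin n → ℝ)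
    (hsminus : ∀ i h, sminus i h = (sbar i - p * s i h) / (1 - p))
    (μ : Measure (Fin n × (Fin (r - 1) → ℝ)))
    (hμ : μ = (unifFin n).prod (Measure.pi fun _ : Fin (r - 1) => lapMeasure l))
    (ν : ℕ → (Fin n × (Fin (r - 1) → ℝ)) → ℝ)
    (hν : ∀ i ω, ν i ω = if hi : i - 1 < r - 1 then ω.2 ⟨i - 1, hi⟩ else 0)
    (J : (Fin n × (Fin (r - 1) → ℝ)) → ℕ)
    (hJ : ∀ ω, J ω = sInf ({i | 1 ≤ i ∧ i ≤ r - 1 ∧ γ ≤ sminus i ω.1 + ν i ω} ∪ {r}))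
    (σ : Fin n → ℝ)
    (hσ : ∀ h, σ h = (Finset.Icc 1 r).sup' (Finset.nonempty_Icc.mpr (by omega))
      (fun i => |sbar i - s i h|))
    -- some round `i ∈ {1,…,r−1}` has mean value at least `γ`
    (hbig : ∃ i, 1 ≤ i ∧ i ≤ r - 1 ∧ γ ≤ sbar i) :
    ∀ h : Fin n, σ h ≤ l * (1 - p) / p →
      (1 / 6 : ℝ≥0∞) ≤ μ {ω | J ω ≠ r ∧ ω.1 = h} / μ {ω | ω.1 = h} := by
  intro h hσh
  obtain ⟨i, hi1, hir, hγi⟩ := hbig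
  have := isProbabilityMeasure_lapMeasure hl
  have hik : i - 1 < r - 1 := by omega
  have hsminus_i : γ - l ≤ sminus i h := by
    have hdev : |sbar i - s i h| ≤ σ h := by
      rw [hσ]
      exact Finset.le_sup' (fun i => |sbar i - s i h|) (Finset.mem_Icc.mpr ⟨hi1, by omega⟩)
    rw [hsminus]
    exact sub_le_sub_mul_div_one_sub hp0 (by linarith) hγi (hdev.trans hσh)
  have hhalt : Function.eval (⟨i - 1, hik⟩ : Fin (r - 1)) ⁻¹' Ioi l ⊆ {x | J (h, x) ≠ r} := by
    intro x hx
    have hmem : i ∈ {i | 1 ≤ i ∧ i ≤ r - 1 ∧ γ ≤ sminus i h + ν i (h, x)} ∪ {r} := by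
      refine Or.inl ⟨hi1, hir, ?_⟩
      rw [hν, dif_pos hik]
      linarith [show l < x ⟨i - 1, hik⟩ from hx]
    show J (h, x) ≠ r
    rw [hJ]
    exact ((Nat.sInf_le hmem).trans_lt (by omega)).ne
  have hn : (n : ℝ≥0∞) ≠ 0 := Nat.cast_ne_zero.mpr (Fin.pos h).ne'
  calc (1 / 6 : ℝ≥0∞) ≤ ENNReal.ofReal (Real.exp (-1) / 2) := one_sixth_le_exp_neg_one_div_two
    _ = Measure.pi (fun _ => lapMeasure l) (Function.eval ⟨i - 1, hik⟩ ⁻¹' Ioi l) := by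
      rw [Measure.pi_eval_preimage _ _ measurableSet_Ioi, lapMeasure_Ioi hl hl.le, neg_div,
        div_self hl.ne']
    _ ≤ Measure.pi (fun _ => lapMeasure l) {x | J (h, x) ≠ r} := measure_mono hhalt
    _ ≤ μ {ω | J ω ≠ r ∧ ω.1 = h} / μ {ω | ω.1 = h} := by
      rw [hμ]
      exact measure_setOf_le_prod_div_fst_eq _ _ (by simp [unifFin_singleton])
        (by simp [unifFin_singleton, hn]) (fun ω => J ω ≠ r)
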